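/- arXiv:1406.3959 — 2 statements merged into one kernel-verified Lean document; each statement's English description precedes it below -/
import Mathlib

section
/- There exists a unique R₁-algebra homomorphism ζ : H^{(2)} → H^{A₁} with ζ(U₁) = T, ζ(U₀) = Y²·T⁻¹, ζ(V₀) = q^{1/4}·Y·T⁻¹·X⁻¹ and ζ(V₁) = q^{1/4}·X·T·Y. Moreover ζ(𝕏) = q^{−1/4}·Y⁻¹·X and ζ(𝕐) = Y², where 𝕏 = V₁⁻¹·U₁⁻¹ and 𝕐 = U₀·U₁ in H^{(2)}. -/
/-!
`ζ` is defined on the generators of `H^{(2)}`, so the point is that their images satisfy the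
defining relations of `H^{(2)}`. The image `Y²T⁻¹ = Y T Y⁻¹` of `U₀` is a conjugate of `T`, hence
satisfies the Hecke relation. Rewriting the cross relation as `Y X T = q^{-1/2} X Y T⁻¹` and using
`T X T = X⁻¹`, `T⁻¹ Y T⁻¹ = Y⁻¹`, both `ζ(V₀)` and `ζ(V₁)` square to `1`, and
`ζ(V₀) ζ(V₁) = q^{1/2} Y² = q^{1/2} ζ(U₀ U₁)`, which for involutions yields the relation
`q^{1/2} V₁ V₀ U₀ U₁ = 1`. Uniqueness holds because the `U_i, V_i` generate `H^{(2)}`.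
-/

noncomputable section

/-- The base ring `R₁ = ℤ[q^{±1/4}, t^{±1/2}]`: the group algebra of `ℤ × ℤ` over `ℤ`,
where `q^{1/4}` corresponds to the exponent `(1,0)` and `t^{1/2}` to `(0,1)`. -/
abbrev R1 : Type := AddMonoidAlgebra ℤ (ℤ × ℤ)

/-- `q^{1/4}` -/
def R1.q4 : R1 := AddMonoidAlgebra.single (1, 0) 1
/-- `q^{-1/4}` -/
def R1.q4i : R1 := AddMonoidAlgebra.single (-1, 0) 1
/-- `t^{1/2}` -/
def R1.t2 : R1 := AddMonoidAlgebra.single (0, 1) 1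
/-- `t^{-1/2}` -/
def R1.t2i : R1 := AddMonoidAlgebra.single (0, -1) 1
/-- `q^{1/2}` -/
def R1.q2 : R1 := AddMonoidAlgebra.single (2, 0) 1
/-- `q^{-1/2}` -/
def R1.q2i : R1 := AddMonoidAlgebra.single (-2, 0) 1

/-- Generators of the DAHA of type `A₁`: `T, T⁻¹, X, X⁻¹, Y, Y⁻¹`. -/
inductive A1gen : Type
  | t | ti | x | xi | y | yi

open FreeAlgebra in
/-- The defining relations of the DAHA of type `A₁`. -/
inductive A1rel : FreeAlgebra R1 A1gen → FreeAlgebra R1 A1gen → Prop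
  | tti : A1rel (ι R1 A1gen.t * ι R1 A1gen.ti) 1
  | tit : A1rel (ι R1 A1gen.ti * ι R1 A1gen.t) 1
  | xxi : A1rel (ι R1 A1gen.x * ι R1 A1gen.xi) 1
  | xix : A1rel (ι R1 A1gen.xi * ι R1 A1gen.x) 1
  | yyi : A1rel (ι R1 A1gen.y * ι R1 A1gen.yi) 1
  | yiy : A1rel (ι R1 A1gen.yi * ι R1 A1gen.y) 1
  | hecke : A1rel ((ι R1 A1gen.t - algebraMap R1 _ R1.t2) *
      (ι R1 A1gen.t + algebraMap R1 _ R1.t2i)) 0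
  | txt : A1rel (ι R1 A1gen.t * ι R1 A1gen.x * ι R1 A1gen.t) (ι R1 A1gen.xi)
  | tiyti : A1rel (ι R1 A1gen.ti * ι R1 A1gen.y * ι R1 A1gen.ti) (ι R1 A1gen.yi)
  | cross : A1rel (ι R1 A1gen.yi * ι R1 A1gen.xi * ι R1 A1gen.y * ι R1 A1gen.x *
      ι R1 A1gen.t * ι R1 A1gen.t * algebraMap R1 _ R1.q2) 1

/-- The DAHA of type `A₁`. -/
abbrev HA1 : Type := RingQuot A1rel

namespace HA1

def T : HA1 := RingQuot.mkAlgHom R1 A1rel (FreeAlgebra.ι R1 A1gen.t)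
def Ti : HA1 := RingQuot.mkAlgHom R1 A1rel (FreeAlgebra.ι R1 A1gen.ti)
def X : HA1 := RingQuot.mkAlgHom R1 A1rel (FreeAlgebra.ι R1 A1gen.x)
def Xi : HA1 := RingQuot.mkAlgHom R1 A1rel (FreeAlgebra.ι R1 A1gen.xi)
def Y : HA1 := RingQuot.mkAlgHom R1 A1rel (FreeAlgebra.ι R1 A1gen.y)
def Yi : HA1 := RingQuot.mkAlgHom R1 A1rel (FreeAlgebra.ι R1 A1gen.yi)

/-- image of a base-ring element in `H^{A₁}` -/
def c (r : R1) : HA1 := algebraMap R1 HA1 r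

end HA1

open HA1

/-- Generators `U₀, U₁, V₀, V₁` of `H^{(2)}`. -/
inductive Cgen : Type
  | u0 | u1 | v0 | v1

open FreeAlgebra in
/-- Defining relations of `H^{(2)}`, the `C∨C₁` DAHA with `q` replaced by `q²` and
parameters `u₀ = u₁ = t`, `v₀ = v₁ = 1`. -/
inductive H2Rel : FreeAlgebra R1 Cgen → FreeAlgebra R1 Cgen → Prop
  | heckeU0 : H2Rel ((ι R1 Cgen.u0 - algebraMap R1 _ R1.t2) *
      (ι R1 Cgen.u0 + algebraMap R1 _ R1.t2i)) 0
  | heckeU1 : H2Rel ((ι R1 Cgen.u1 - algebraMap R1 _ R1.t2) *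
      (ι R1 Cgen.u1 + algebraMap R1 _ R1.t2i)) 0
  | v0sq : H2Rel (ι R1 Cgen.v0 * ι R1 Cgen.v0) 1
  | v1sq : H2Rel (ι R1 Cgen.v1 * ι R1 Cgen.v1) 1
  | unit : H2Rel (algebraMap R1 _ R1.q2 * ι R1 Cgen.v1 * ι R1 Cgen.v0 *
      ι R1 Cgen.u0 * ι R1 Cgen.u1) 1

/-- The DAHA `H^{(2)}`. -/
abbrev H2 : Type := RingQuot H2Rel

namespace H2

def U0 : H2 := RingQuot.mkAlgHom R1 H2Rel (FreeAlgebra.ι R1 Cgen.u0)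
def U1 : H2 := RingQuot.mkAlgHom R1 H2Rel (FreeAlgebra.ι R1 Cgen.u1)
def V0 : H2 := RingQuot.mkAlgHom R1 H2Rel (FreeAlgebra.ι R1 Cgen.v0)
def V1 : H2 := RingQuot.mkAlgHom R1 H2Rel (FreeAlgebra.ι R1 Cgen.v1)

/-- `U₁⁻¹ = U₁ − t^{1/2} + t^{−1/2}` -/
def U1i : H2 := U1 - algebraMap R1 H2 R1.t2 + algebraMap R1 H2 R1.t2i
/-- `U₀⁻¹ = U₀ − t^{1/2} + t^{−1/2}` -/
def U0i : H2 := U0 - algebraMap R1 H2 R1.t2 + algebraMap R1 H2 R1.t2i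
/-- `V₁⁻¹ = V₁` (here `v₁ = 1`) -/
def V1i : H2 := V1
/-- `𝕏 = V₁⁻¹·U₁⁻¹` -/
def XX : H2 := V1i * U1i
/-- `𝕐 = U₀·U₁` -/
def YY : H2 := U0 * U1

end H2

section Hecke

variable {R A : Type*} [CommRing R] [Ring A] [Algebra R A]

def SatisfiesHecke (s s' : R) (a : A) : Prop :=
  (a - algebraMap R A s) * (a + algebraMap R A s') = 0

theorem SatisfiesHecke.conj {s s' : R} {a u v : A} (h : SatisfiesHecke s s' a)
    (huv : u * v = 1) (hvu : v * u = 1) : SatisfiesHecke s s' (u * a * v) := by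
  have conj_add : ∀ r : R, u * a * v + algebraMap R A r = u * (a + algebraMap R A r) * v := by
    intro r
    rw [mul_add, add_mul, ← Algebra.commutes r u, mul_assoc (algebraMap R A r), huv, mul_one]
  have conj_sub : u * a * v - algebraMap R A s = u * (a + algebraMap R A (-s)) * v := by
    rw [← conj_add, map_neg, sub_eq_add_neg]
  unfold SatisfiesHecke at h ⊢
  calc (u * a * v - algebraMap R A s) * (u * a * v + algebraMap R A s')
      = u * ((a - algebraMap R A s) * (v * u) * (a + algebraMap R A s')) * v := by
        rw [conj_sub, conj_add, map_neg, ← sub_eq_add_neg]; simp only [mul_assoc]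
    _ = 0 := by rw [hvu, mul_one, h, mul_zero, zero_mul]

theorem SatisfiesHecke.eq_of_mul_eq_one {s s' : R} {a b : A} (h : SatisfiesHecke s s' a)
    (hs : s * s' = 1) (hba : b * a = 1) : b = a - algebraMap R A s + algebraMap R A s' := by
  have expand : (a - algebraMap R A s) * (a + algebraMap R A s') =
      a * (a - algebraMap R A s + algebraMap R A s') - algebraMap R A s * algebraMap R A s' := by
    rw [sub_mul, mul_add, mul_add, Algebra.commutes s a]; noncomm_ring
  have right_inv : a * (a - algebraMap R A s + algebraMap R A s') = 1 := by
    rwa [SatisfiesHecke, expand, ← map_mul, hs, map_one, sub_eq_zero] at h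
  calc b = b * a * (a - algebraMap R A s + algebraMap R A s') := by
        rw [mul_assoc, right_inv, mul_one]
    _ = _ := by rw [hba, one_mul]

end Hecke

theorem smul_mul_mul_eq_one_of_mul_self {R A : Type*} [CommSemiring R] [Semiring A]
    [Algebra R A] {r r' : R} {P Q W : A} (hr : r * r' = 1) (hP : P * P = 1) (hQ : Q * Q = 1)
    (hQP : Q * P = r • W) : r • (P * Q * W) = 1 := by
  have hW : W = r' • (Q * P) := by rw [hQP, smul_smul, mul_comm, hr, one_smul]
  calc r • (P * Q * W) = (r * r') • (P * (Q * Q) * P) := by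
        rw [hW, mul_smul_comm, smul_smul]; simp only [mul_assoc]
    _ = 1 := by rw [hr, one_smul, hQ, mul_one, hP]

namespace R1

theorem t2_mul_t2i : t2 * t2i = 1 := by
  simp [t2, t2i, AddMonoidAlgebra.single_mul_single, AddMonoidAlgebra.one_def, Prod.mk_zero_zero]

theorem q2_mul_q2i : q2 * q2i = 1 := by
  simp [q2, q2i, AddMonoidAlgebra.single_mul_single, AddMonoidAlgebra.one_def, Prod.mk_zero_zero]

theorem q4_mul_q4 : q4 * q4 = q2 := by
  simp [q4, q2, AddMonoidAlgebra.single_mul_single]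

theorem q4_mul_q2i : q4 * q2i = q4i := by
  simp [q4, q2i, q4i, AddMonoidAlgebra.single_mul_single]

end R1

namespace HA1

theorem T_mul_Ti : T * Ti = 1 := by
  simpa [T, Ti] using RingQuot.mkAlgHom_rel R1 A1rel.tti

theorem Ti_mul_T : Ti * T = 1 := by
  simpa [T, Ti] using RingQuot.mkAlgHom_rel R1 A1rel.tit

theorem X_mul_Xi : X * Xi = 1 := by
  simpa [X, Xi] using RingQuot.mkAlgHom_rel R1 A1rel.xxi

theorem Xi_mul_X : Xi * X = 1 := by
  simpa [X, Xi] using RingQuot.mkAlgHom_rel R1 A1rel.xix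

theorem Y_mul_Yi : Y * Yi = 1 := by
  simpa [Y, Yi] using RingQuot.mkAlgHom_rel R1 A1rel.yyi

theorem Yi_mul_Y : Yi * Y = 1 := by
  simpa [Y, Yi] using RingQuot.mkAlgHom_rel R1 A1rel.yiy

theorem satisfiesHecke_T : SatisfiesHecke R1.t2 R1.t2i T := by
  simpa [SatisfiesHecke, T] using RingQuot.mkAlgHom_rel R1 A1rel.hecke

theorem T_mul_X_mul_T : T * X * T = Xi := by
  simpa [T, X, Xi] using RingQuot.mkAlgHom_rel R1 A1rel.txt

theorem Ti_mul_Y_mul_Ti : Ti * Y * Ti = Yi := by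
  simpa [T, Ti, Y, Yi] using RingQuot.mkAlgHom_rel R1 A1rel.tiyti

theorem q2_smul_cross : R1.q2 • (Yi * Xi * Y * X * T * T) = 1 := by
  simpa [T, X, Xi, Y, Yi, Algebra.smul_def, Algebra.commutes R1.q2] using
    RingQuot.mkAlgHom_rel R1 A1rel.cross

theorem Ti_eq : Ti = T - algebraMap R1 HA1 R1.t2 + algebraMap R1 HA1 R1.t2i :=
  satisfiesHecke_T.eq_of_mul_eq_one R1.t2_mul_t2i Ti_mul_T

theorem Ti_mul_Xi : Ti * Xi = X * T := by
  rw [← T_mul_X_mul_T]; simp only [← mul_assoc, Ti_mul_T, one_mul]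

theorem X_mul_T_mul_X_mul_T : X * T * (X * T) = 1 := by
  calc X * T * (X * T) = X * (T * X * T) := by simp only [mul_assoc]
    _ = 1 := by rw [T_mul_X_mul_T, X_mul_Xi]

theorem Ti_mul_Y : Ti * Y = Yi * T := by
  rw [← Ti_mul_Y_mul_Ti, mul_assoc _ Ti, Ti_mul_T, mul_one]

theorem Y_mul_Ti : Y * Ti = T * Yi := by
  rw [← Ti_mul_Y_mul_Ti]; simp only [← mul_assoc, T_mul_Ti, one_mul]

theorem Y_mul_X_mul_T : Y * X * T = R1.q2i • (X * Y * Ti) := by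
  have : R1.q2 • (Y * X * T) = X * Y * Ti := by
    calc R1.q2 • (Y * X * T)
        = R1.q2 • (X * (Y * Yi) * Xi * (Y * X * T) * (T * Ti)) := by
          rw [Y_mul_Yi, mul_one, X_mul_Xi, one_mul, T_mul_Ti, mul_one]
      _ = X * Y * (R1.q2 • (Yi * Xi * Y * X * T * T)) * Ti := by
          rw [mul_smul_comm, smul_mul_assoc]; simp only [mul_assoc]
      _ = X * Y * Ti := by rw [q2_smul_cross, mul_one]
  rw [← this, smul_smul, mul_comm, R1.q2_mul_q2i, one_smul]

theorem X_mul_T_mul_Y_mul_Ti : X * T * Y * Ti = R1.q2i • (Yi * X) := by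
  calc X * T * Y * Ti = Yi * (Y * X * T) * (Y * Ti) := by
        simp only [← mul_assoc, Yi_mul_Y, one_mul]
    _ = R1.q2i • (Yi * X * (Y * (Ti * Y * Ti))) := by
        rw [Y_mul_X_mul_T, mul_smul_comm, smul_mul_assoc]; simp only [mul_assoc]
    _ = R1.q2i • (Yi * X) := by rw [Ti_mul_Y_mul_Ti, Y_mul_Yi, mul_one]

theorem c_mul_eq_smul (r : R1) (a : HA1) : c r * a = r • a := (Algebra.smul_def r a).symm

end HA1

open HA1

def zetaGen : Cgen → HA1
  | .u0 => Y * Y * Ti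
  | .u1 => T
  | .v0 => R1.q4 • (Y * Ti * Xi)
  | .v1 => R1.q4 • (X * T * Y)

theorem satisfiesHecke_zetaGen_u0 : SatisfiesHecke R1.t2 R1.t2i (zetaGen .u0) := by
  have : zetaGen .u0 = Y * T * Yi := by rw [zetaGen, mul_assoc Y Y, Y_mul_Ti, ← mul_assoc]
  exact this ▸ satisfiesHecke_T.conj Y_mul_Yi Yi_mul_Y

theorem zetaGen_v0_mul_self : zetaGen .v0 * zetaGen .v0 = 1 := by
  have hYXT : Y * X * T * (Y * X * T) = R1.q2i • 1 := by
    calc Y * X * T * (Y * X * T) = R1.q2i • (X * Y * Ti * (Y * X * T)) := by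
          nth_rw 1 [Y_mul_X_mul_T]; rw [smul_mul_assoc]
      _ = R1.q2i • (X * Y * (Ti * Y) * (X * T)) := by simp only [mul_assoc]
      _ = R1.q2i • (X * (Y * Yi) * T * (X * T)) := by rw [Ti_mul_Y]; simp only [mul_assoc]
      _ = R1.q2i • 1 := by rw [Y_mul_Yi, mul_one, X_mul_T_mul_X_mul_T]
  have hw : Y * Ti * Xi = Y * X * T := by rw [mul_assoc, Ti_mul_Xi, ← mul_assoc]
  rw [zetaGen, hw, smul_mul_smul_comm, hYXT, smul_smul,
    R1.q4_mul_q4, R1.q2_mul_q2i, one_smul]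

theorem zetaGen_v1_mul_self : zetaGen .v1 * zetaGen .v1 = 1 := by
  have hXTY : X * T * Y * (X * T * Y) = R1.q2i • 1 := by
    calc X * T * Y * (X * T * Y) = X * T * (Y * X * T) * Y := by simp only [mul_assoc]
      _ = R1.q2i • (X * T * X * Y * (Ti * Y)) := by
          rw [Y_mul_X_mul_T, mul_smul_comm, smul_mul_assoc]; simp only [mul_assoc]
      _ = R1.q2i • (X * T * (X * (Y * Yi) * T)) := by rw [Ti_mul_Y]; simp only [mul_assoc]
      _ = R1.q2i • 1 := by rw [Y_mul_Yi, mul_one, X_mul_T_mul_X_mul_T]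
  rw [zetaGen, smul_mul_smul_comm, hXTY, smul_smul, R1.q4_mul_q4, R1.q2_mul_q2i, one_smul]

theorem zetaGen_v0_mul_v1 : zetaGen .v0 * zetaGen .v1 = R1.q2 • (zetaGen .u0 * zetaGen .u1) := by
  calc zetaGen .v0 * zetaGen .v1 = (R1.q4 * R1.q4) • (Y * Ti * (Xi * X) * T * Y) := by
        rw [zetaGen, zetaGen, smul_mul_smul_comm]; simp only [mul_assoc]
    _ = R1.q2 • (Y * Y * Ti * T) := by
        rw [R1.q4_mul_q4, Xi_mul_X, mul_one, mul_assoc Y Ti, Ti_mul_T, mul_one, mul_assoc (Y * Y) Ti,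
          Ti_mul_T, mul_one]

theorem zetaGen_respects_rel ⦃x y : FreeAlgebra R1 Cgen⦄ (h : H2Rel x y) :
    FreeAlgebra.lift R1 zetaGen x = FreeAlgebra.lift R1 zetaGen y := by
  cases h with
  | heckeU0 => simpa [SatisfiesHecke] using satisfiesHecke_zetaGen_u0
  | heckeU1 => simpa [SatisfiesHecke, zetaGen] using satisfiesHecke_T
  | v0sq => simpa using zetaGen_v0_mul_self
  | v1sq => simpa using zetaGen_v1_mul_self
  | unit =>
    simpa only [map_mul, map_one, AlgHom.commutes, FreeAlgebra.lift_ι_apply, Algebra.smul_def,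
      mul_assoc] using smul_mul_mul_eq_one_of_mul_self R1.q2_mul_q2i
      zetaGen_v1_mul_self zetaGen_v0_mul_self zetaGen_v0_mul_v1

def zeta : H2 →ₐ[R1] HA1 :=
  RingQuot.liftAlgHom R1 ⟨FreeAlgebra.lift R1 zetaGen, zetaGen_respects_rel⟩

theorem zeta_mk_ι (g : Cgen) :
    zeta (RingQuot.mkAlgHom R1 H2Rel (FreeAlgebra.ι R1 g)) = zetaGen g := by
  rw [zeta, RingQuot.liftAlgHom_mkAlgHom_apply, FreeAlgebra.lift_ι_apply]

theorem H2.algHom_ext {B : Type*} [Semiring B] [Algebra R1 B] {f g : H2 →ₐ[R1] B}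
    (h0 : f H2.U0 = g H2.U0) (h1 : f H2.U1 = g H2.U1) (hv0 : f H2.V0 = g H2.V0)
    (hv1 : f H2.V1 = g H2.V1) : f = g := by
  refine RingQuot.ringQuot_ext' R1 f g (FreeAlgebra.hom_ext (funext fun i => ?_))
  cases i <;> assumption

theorem H2.map_U1i (f : H2 →ₐ[R1] HA1) :
    f H2.U1i = f H2.U1 - algebraMap R1 HA1 R1.t2 + algebraMap R1 HA1 R1.t2i := by
  have hsub : f (H2.U1 - algebraMap R1 H2 R1.t2) = f H2.U1 - f (algebraMap R1 H2 R1.t2) :=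
    map_sub f _ _
  rw [H2.U1i, map_add, hsub, AlgHom.commutes, AlgHom.commutes]

/-- there is a unique `R₁`-algebra homomorphism `ζ : H^{(2)} → H^{A₁}` with
`ζ(U₁) = T`, `ζ(U₀) = Y²·T⁻¹`, `ζ(V₀) = q^{1/4}·Y·T⁻¹·X⁻¹`, `ζ(V₁) = q^{1/4}·X·T·Y`;
moreover `ζ(𝕏) = q^{−1/4}·Y⁻¹·X` and `ζ(𝕐) = Y²`. -/
theorem statement3 :
    (∃! ζ : H2 →ₐ[R1] HA1,
      ζ H2.U1 = T ∧ ζ H2.U0 = Y * Y * Ti ∧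
      ζ H2.V0 = c R1.q4 * Y * Ti * Xi ∧ ζ H2.V1 = c R1.q4 * X * T * Y) ∧
    (∀ ζ : H2 →ₐ[R1] HA1,
      (ζ H2.U1 = T ∧ ζ H2.U0 = Y * Y * Ti ∧
       ζ H2.V0 = c R1.q4 * Y * Ti * Xi ∧ ζ H2.V1 = c R1.q4 * X * T * Y) →
      ζ H2.XX = c R1.q4i * Yi * X ∧ ζ H2.YY = Y * Y) := by
  simp only [c_mul_eq_smul, smul_mul_assoc]
  refine ⟨⟨zeta, ⟨zeta_mk_ι .u1, zeta_mk_ι .u0, zeta_mk_ι .v0, zeta_mk_ι .v1⟩, ?_⟩, ?_⟩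
  · rintro ζ ⟨h1, h0, hv0, hv1⟩
    exact H2.algHom_ext (h0.trans (zeta_mk_ι .u0).symm) (h1.trans (zeta_mk_ι .u1).symm)
      (hv0.trans (zeta_mk_ι .v0).symm) (hv1.trans (zeta_mk_ι .v1).symm)
  · rintro ζ ⟨h1, h0, -, hv1⟩
    constructor
    · rw [H2.XX, H2.V1i, map_mul, H2.map_U1i, h1, hv1, ← Ti_eq, smul_mul_assoc,
        X_mul_T_mul_Y_mul_Ti, smul_smul, R1.q4_mul_q2i]
    · rw [H2.YY, map_mul, h0, h1, mul_assoc, Ti_mul_T, mul_one]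
end
end

section
/- Let θ₋ be the ring automorphism of R that interchanges v₀^{1/2} and v₁^{1/2} and fixes q^{1/4}, u₀^{1/2}, u₁^{1/2}. There exists a unique ring automorphism τ₋ of H, semilinear over θ₋, with τ₋(U₀) = U₀, τ₋(U₁) = U₁, τ₋(V₁) = q^{−1/4}·V₁⁻¹·𝕐⁻¹ (= V₀) and τ₋(V₀) = V₀⁻¹·V₁·V₀. It satisfies τ₋(𝕐) = 𝕐 and τ₋(𝕏) = V₀⁻¹·U₁⁻¹ = q^{1/4}·U₀·𝕏⁻¹·U₁⁻¹. -/
noncomputable section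

/-- The base ring `R = ℤ[q^{±1/4}, u₀^{±1/2}, u₁^{±1/2}, v₀^{±1/2}, v₁^{±1/2}]`:
the group algebra over `ℤ` of the free abelian group on five generators, where the
exponents record the variables `(q^{1/4}, u₀^{1/2}, u₁^{1/2}, v₀^{1/2}, v₁^{1/2})`. -/
abbrev R5 : Type := AddMonoidAlgebra ℤ (ℤ × ℤ × ℤ × ℤ × ℤ)

namespace R5
/-- `q^{1/4}` -/
def q4 : R5 := AddMonoidAlgebra.single (1, 0, 0, 0, 0) 1
/-- `q^{-1/4}` -/
def q4i : R5 := AddMonoidAlgebra.single (-1, 0, 0, 0, 0) 1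
/-- `u₀^{1/2}` -/
def u0h : R5 := AddMonoidAlgebra.single (0, 1, 0, 0, 0) 1
def u0hi : R5 := AddMonoidAlgebra.single (0, -1, 0, 0, 0) 1
/-- `u₁^{1/2}` -/
def u1h : R5 := AddMonoidAlgebra.single (0, 0, 1, 0, 0) 1
def u1hi : R5 := AddMonoidAlgebra.single (0, 0, -1, 0, 0) 1
/-- `v₀^{1/2}` -/
def v0h : R5 := AddMonoidAlgebra.single (0, 0, 0, 1, 0) 1
def v0hi : R5 := AddMonoidAlgebra.single (0, 0, 0, -1, 0) 1
/-- `v₁^{1/2}` -/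
def v1h : R5 := AddMonoidAlgebra.single (0, 0, 0, 0, 1) 1
def v1hi : R5 := AddMonoidAlgebra.single (0, 0, 0, 0, -1) 1
end R5

open FreeAlgebra in
/-- The defining relations of the DAHA of type `C∨C₁`:
`(U_i − u_i^{1/2})(U_i + u_i^{−1/2}) = 0`, `(V_i − v_i^{1/2})(V_i + v_i^{−1/2}) = 0`
for `i = 0, 1`, and `q^{1/4}·V₁·V₀·U₀·U₁ = 1`. -/
inductive Crel : FreeAlgebra R5 Cgen → FreeAlgebra R5 Cgen → Prop
  | heckeU0 : Crel ((ι R5 Cgen.u0 - algebraMap R5 _ R5.u0h) *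
      (ι R5 Cgen.u0 + algebraMap R5 _ R5.u0hi)) 0
  | heckeU1 : Crel ((ι R5 Cgen.u1 - algebraMap R5 _ R5.u1h) *
      (ι R5 Cgen.u1 + algebraMap R5 _ R5.u1hi)) 0
  | heckeV0 : Crel ((ι R5 Cgen.v0 - algebraMap R5 _ R5.v0h) *
      (ι R5 Cgen.v0 + algebraMap R5 _ R5.v0hi)) 0
  | heckeV1 : Crel ((ι R5 Cgen.v1 - algebraMap R5 _ R5.v1h) *
      (ι R5 Cgen.v1 + algebraMap R5 _ R5.v1hi)) 0
  | unit : Crel (algebraMap R5 _ R5.q4 * ι R5 Cgen.v1 * ι R5 Cgen.v0 *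
      ι R5 Cgen.u0 * ι R5 Cgen.u1) 1

/-- The DAHA of type `C∨C₁`. -/
abbrev H : Type := RingQuot Crel

namespace H

def U0 : H := RingQuot.mkAlgHom R5 Crel (FreeAlgebra.ι R5 Cgen.u0)
def U1 : H := RingQuot.mkAlgHom R5 Crel (FreeAlgebra.ι R5 Cgen.u1)
def V0 : H := RingQuot.mkAlgHom R5 Crel (FreeAlgebra.ι R5 Cgen.v0)
def V1 : H := RingQuot.mkAlgHom R5 Crel (FreeAlgebra.ι R5 Cgen.v1)

/-- image of a base-ring element in `H` -/
def c (r : R5) : H := algebraMap R5 H r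

/-- `U₀⁻¹ = U₀ − u₀^{1/2} + u₀^{−1/2}` -/
def U0i : H := U0 - c R5.u0h + c R5.u0hi
/-- `U₁⁻¹ = U₁ − u₁^{1/2} + u₁^{−1/2}` -/
def U1i : H := U1 - c R5.u1h + c R5.u1hi
/-- `V₀⁻¹ = V₀ − v₀^{1/2} + v₀^{−1/2}` -/
def V0i : H := V0 - c R5.v0h + c R5.v0hi
/-- `V₁⁻¹ = V₁ − v₁^{1/2} + v₁^{−1/2}` -/
def V1i : H := V1 - c R5.v1h + c R5.v1hi
/-- `𝕏 = V₁⁻¹·U₁⁻¹` -/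
def XX : H := V1i * U1i
/-- `𝕏⁻¹ = U₁·V₁` -/
def XXi : H := U1 * V1
/-- `𝕐 = U₀·U₁` -/
def YY : H := U0 * U1
/-- `𝕐⁻¹ = U₁⁻¹·U₀⁻¹` -/
def YYi : H := U1i * U0i

end H

open H

/-- `φ : H → H'` is semilinear over `θ : R → R` -/
def Semilin (θ : R5 ≃+* R5) (f : H → H) : Prop :=
  ∀ r : R5, f (algebraMap R5 H r) = algebraMap R5 H (θ r)

/-- `θ₋` interchanges `v₀^{1/2}` and `v₁^{1/2}` fixing `q^{1/4}, u₀^{1/2}, u₁^{1/2}`. -/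
def ThetaMinus (θ : R5 ≃+* R5) : Prop :=
  θ R5.q4 = R5.q4 ∧ θ R5.u0h = R5.u0h ∧ θ R5.u1h = R5.u1h ∧
  θ R5.v0h = R5.v1h ∧ θ R5.v1h = R5.v0h

/-- defining conditions on `τ₋` -/
def TauMinus (θ : R5 ≃+* R5) (τ : H ≃+* H) : Prop :=
  Semilin θ τ ∧ τ U0 = U0 ∧ τ U1 = U1 ∧
  τ V1 = c R5.q4i * V1i * YYi ∧ τ V0 = V0i * V1 * V0

/-!
`θ₋` is induced by the automorphism of `ℤ⁵` swapping the last two coordinates, and it is unique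
because a ring map out of a group ring is determined by its values on generators of the group.

The prescribed images of `U₀, U₁, V₀, V₁` satisfy the defining relations of `H` with scalars
twisted by `θ₋`: the Hecke relation of `V₀⁻¹V₁V₀` is that of `V₁` conjugated, and the unit
relation only changes by the conjugation `V₀(V₀⁻¹V₁V₀) = V₁V₀`. So they define a
`θ₋`-semilinear ring endomorphism `τ₋`; symmetrically `V₀ ↦ V₁, V₁ ↦ V₁V₀V₁⁻¹` defines a
`θ₋⁻¹`-semilinear `σ`, and `τ₋, σ` are inverse to each other on generators. The identity
`V₀ = q^{-1/4}V₁⁻¹𝕐⁻¹` is the relation `q^{1/4}V₁V₀U₀U₁ = 1` solved for `V₀`, `q^{1/4}` being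
central.
-/

theorem AddMonoidAlgebra.ringHom_ext_of_closure_eq_top {G S : Type*} [AddGroup G] [Semiring S]
    {s : Set G} (hs : AddSubgroup.closure s = ⊤) {f g : AddMonoidAlgebra ℤ G →+* S}
    (h : ∀ a ∈ s, f (single a 1) = g (single a 1)) : f = g := by
  refine ringHom_ext' (RingHom.ext_int _ _)
    (MonoidHom.eq_of_eqOn_dense (s := Multiplicative.toAdd ⁻¹' s) ?_ fun a ha => h _ ha)
  rw [← AddSubgroup.toSubgroup_closure, hs]
  rfl

theorem map_eq_of_mul_eq_one {M N F : Type*} [Monoid M] [Monoid N] [FunLike F M N]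
    [MonoidHomClass F M N] (f : F) {a a' : M} {b b' : N} (ha : a' * a = 1) (hb : b * b' = 1)
    (h : f a = b) : f a' = b' :=
  left_inv_eq_right_inv (by rw [← h, ← map_mul, ha, map_one]) hb

namespace FreeAlgebra

variable {R S A X : Type*} [CommSemiring R] [CommSemiring S] [Semiring A] [Algebra S A]

def twistedLift (θ : R →+* S) (t : X → A) : FreeAlgebra R X →+* A :=
  letI := Algebra.compHom A θ
  (lift R t : FreeAlgebra R X →ₐ[R] A)

@[simp]
theorem twistedLift_ι (θ : R →+* S) (t : X → A) (x : X) : twistedLift θ t (ι R x) = t x :=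
  letI := Algebra.compHom A θ
  lift_ι_apply t x

@[simp]
theorem twistedLift_algebraMap (θ : R →+* S) (t : X → A) (r : R) :
    twistedLift θ t (algebraMap R _ r) = algebraMap S A (θ r) :=
  letI := Algebra.compHom A θ
  (lift R t).commutes r

theorem ringHom_ext {f g : FreeAlgebra R X →+* A}
    (h₁ : ∀ r, f (algebraMap R _ r) = g (algebraMap R _ r)) (h₂ : ∀ x, f (ι R x) = g (ι R x)) :
    f = g := by
  ext a
  induction a using FreeAlgebra.induction with
  | grade0 r => exact h₁ r
  | grade1 x => exact h₂ x
  | mul a b ha hb => rw [map_mul, map_mul, ha, hb]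
  | add a b ha hb => rw [map_add, map_add, ha, hb]

end FreeAlgebra

section Hecke

variable {R A : Type*} [CommRing R] [Ring A] [Algebra R A]

def heckeUnit (x : A) {a b : R} (hab : a * b = 1)
    (h : (x - algebraMap R A a) * (x + algebraMap R A b) = 0) : Aˣ where
  val := x
  inv := x - algebraMap R A a + algebraMap R A b
  val_inv := by
    have hab' : algebraMap R A a * algebraMap R A b = 1 := by rw [← map_mul, hab, map_one]
    rw [← sub_eq_zero]
    calc x * (x - algebraMap R A a + algebraMap R A b) - 1
        = (x - algebraMap R A a) * (x + algebraMap R A b)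
          + (algebraMap R A a * x - x * algebraMap R A a)
          + (algebraMap R A a * algebraMap R A b - 1) := by noncomm_ring
      _ = 0 := by rw [h, Algebra.commutes, hab']; simp
  inv_val := by
    have hab' : algebraMap R A a * algebraMap R A b = 1 := by rw [← map_mul, hab, map_one]
    rw [← sub_eq_zero]
    calc (x - algebraMap R A a + algebraMap R A b) * x - 1
        = (x - algebraMap R A a) * (x + algebraMap R A b)
          + (algebraMap R A b * x - x * algebraMap R A b)
          + (algebraMap R A a * algebraMap R A b - 1) := by noncomm_ring
      _ = 0 := by rw [h, Algebra.commutes, hab']; simp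

theorem hecke_conj {x : A} {a b : R} (h : (x - algebraMap R A a) * (x + algebraMap R A b) = 0)
    (g : Aˣ) :
    (↑g⁻¹ * x * g - algebraMap R A a) * (↑g⁻¹ * x * g + algebraMap R A b) = 0 := by
  have conj : ∀ r : R, ↑g⁻¹ * algebraMap R A r * g = algebraMap R A r := fun r => by
    rw [← Algebra.commutes, mul_assoc, Units.inv_mul, mul_one]
  calc _ = (↑g⁻¹ * (x - algebraMap R A a) * g) * (↑g⁻¹ * (x + algebraMap R A b) * g) := by
        conv_rhs => rw [mul_sub, sub_mul, conj, mul_add, add_mul, conj]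
    _ = ↑g⁻¹ * ((x - algebraMap R A a) * (x + algebraMap R A b)) * g := by
        simp only [mul_assoc, Units.mul_inv_cancel_left]
    _ = 0 := by rw [h, mul_zero, zero_mul]

end Hecke

namespace R5

theorem closure_basis_eq_top : AddSubgroup.closure ({(1, 0, 0, 0, 0), (0, 1, 0, 0, 0),
    (0, 0, 1, 0, 0), (0, 0, 0, 1, 0), (0, 0, 0, 0, 1)} : Set (ℤ × ℤ × ℤ × ℤ × ℤ)) = ⊤ := by
  refine eq_top_iff.2 fun ⟨a, b, c, d, e⟩ _ => ?_
  have hx : ((a, b, c, d, e) : ℤ × ℤ × ℤ × ℤ × ℤ) = a • (1, 0, 0, 0, 0) + b • (0, 1, 0, 0, 0) +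
      c • (0, 0, 1, 0, 0) + d • (0, 0, 0, 1, 0) + e • (0, 0, 0, 0, 1) := by simp
  rw [hx]
  refine add_mem (add_mem (add_mem (add_mem ?_ ?_) ?_) ?_) ?_ <;>
    exact zsmul_mem (AddSubgroup.subset_closure (by simp)) _

theorem q4_mul_q4i : q4 * q4i = 1 := by
  rw [q4, q4i, AddMonoidAlgebra.single_mul_single]; rfl
theorem u0h_mul_u0hi : u0h * u0hi = 1 := by
  rw [u0h, u0hi, AddMonoidAlgebra.single_mul_single]; rfl
theorem u1h_mul_u1hi : u1h * u1hi = 1 := by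
  rw [u1h, u1hi, AddMonoidAlgebra.single_mul_single]; rfl
theorem v0h_mul_v0hi : v0h * v0hi = 1 := by
  rw [v0h, v0hi, AddMonoidAlgebra.single_mul_single]; rfl
theorem v1h_mul_v1hi : v1h * v1hi = 1 := by
  rw [v1h, v1hi, AddMonoidAlgebra.single_mul_single]; rfl

def swapLast : (ℤ × ℤ × ℤ × ℤ × ℤ) ≃+ (ℤ × ℤ × ℤ × ℤ × ℤ) where
  toFun x := (x.1, x.2.1, x.2.2.1, x.2.2.2.2, x.2.2.2.1)
  invFun x := (x.1, x.2.1, x.2.2.1, x.2.2.2.2, x.2.2.2.1)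
  left_inv _ := rfl
  right_inv _ := rfl
  map_add' _ _ := rfl

def thetaSwap : R5 ≃+* R5 := (AddMonoidAlgebra.domCongr ℤ ℤ swapLast).toRingEquiv

end R5

open R5

theorem thetaMinus_thetaSwap : ThetaMinus thetaSwap := by
  refine ⟨?_, ?_, ?_, ?_, ?_⟩ <;>
    exact AddMonoidAlgebra.domCongr_single (R := ℤ) (A := ℤ) ..

namespace ThetaMinus

variable {θ : R5 ≃+* R5} (hθ : ThetaMinus θ)
include hθ

theorem eq {θ' : R5 ≃+* R5} (hθ' : ThetaMinus θ') : θ = θ' := by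
  refine RingEquiv.toRingHom_injective
    (AddMonoidAlgebra.ringHom_ext_of_closure_eq_top closure_basis_eq_top ?_)
  rintro a (rfl | rfl | rfl | rfl | rfl)
  exacts [hθ.1.trans hθ'.1.symm, hθ.2.1.trans hθ'.2.1.symm, hθ.2.2.1.trans hθ'.2.2.1.symm,
    hθ.2.2.2.1.trans hθ'.2.2.2.1.symm, hθ.2.2.2.2.trans hθ'.2.2.2.2.symm]

theorem symm : ThetaMinus θ.symm := by
  obtain ⟨hq, hu0, hu1, hv0, hv1⟩ := hθ
  exact ⟨θ.symm_apply_eq.2 hq.symm, θ.symm_apply_eq.2 hu0.symm, θ.symm_apply_eq.2 hu1.symm,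
    θ.symm_apply_eq.2 hv1.symm, θ.symm_apply_eq.2 hv0.symm⟩

theorem map_u0hi : θ u0hi = u0hi :=
  map_eq_of_mul_eq_one θ (mul_comm u0h _ ▸ u0h_mul_u0hi) u0h_mul_u0hi hθ.2.1
theorem map_u1hi : θ u1hi = u1hi :=
  map_eq_of_mul_eq_one θ (mul_comm u1h _ ▸ u1h_mul_u1hi) u1h_mul_u1hi hθ.2.2.1
theorem map_v0hi : θ v0hi = v1hi :=
  map_eq_of_mul_eq_one θ (mul_comm v0h _ ▸ v0h_mul_v0hi) v1h_mul_v1hi hθ.2.2.2.1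
theorem map_v1hi : θ v1hi = v0hi :=
  map_eq_of_mul_eq_one θ (mul_comm v1h _ ▸ v1h_mul_v1hi) v0h_mul_v0hi hθ.2.2.2.2

end ThetaMinus

theorem existsUnique_thetaMinus : ∃! θ : R5 ≃+* R5, ThetaMinus θ :=
  ⟨thetaSwap, thetaMinus_thetaSwap, fun _ hθ => hθ.eq thetaMinus_thetaSwap⟩

namespace H

theorem hecke_U0 : (U0 - algebraMap R5 H u0h) * (U0 + algebraMap R5 H u0hi) = 0 := by
  simpa [U0] using RingQuot.mkAlgHom_rel R5 Crel.heckeU0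
theorem hecke_U1 : (U1 - algebraMap R5 H u1h) * (U1 + algebraMap R5 H u1hi) = 0 := by
  simpa [U1] using RingQuot.mkAlgHom_rel R5 Crel.heckeU1
theorem hecke_V0 : (V0 - algebraMap R5 H v0h) * (V0 + algebraMap R5 H v0hi) = 0 := by
  simpa [V0] using RingQuot.mkAlgHom_rel R5 Crel.heckeV0
theorem hecke_V1 : (V1 - algebraMap R5 H v1h) * (V1 + algebraMap R5 H v1hi) = 0 := by
  simpa [V1] using RingQuot.mkAlgHom_rel R5 Crel.heckeV1
theorem q4_mul_V1_mul_V0_mul_U0_mul_U1 : algebraMap R5 H q4 * V1 * V0 * U0 * U1 = 1 := by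
  simpa [U0, U1, V0, V1] using RingQuot.mkAlgHom_rel R5 Crel.unit

def unitU0 : Hˣ := heckeUnit U0 u0h_mul_u0hi hecke_U0
def unitU1 : Hˣ := heckeUnit U1 u1h_mul_u1hi hecke_U1
def unitV0 : Hˣ := heckeUnit V0 v0h_mul_v0hi hecke_V0
def unitV1 : Hˣ := heckeUnit V1 v1h_mul_v1hi hecke_V1
def unitQ : Hˣ := Units.map (algebraMap R5 H) ⟨q4, q4i, q4_mul_q4i, by rw [mul_comm, q4_mul_q4i]⟩

@[simp] theorem val_unitU0 : (unitU0 : H) = U0 := rfl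
@[simp] theorem val_unitU1 : (unitU1 : H) = U1 := rfl
@[simp] theorem val_unitV0 : (unitV0 : H) = V0 := rfl
@[simp] theorem val_unitV1 : (unitV1 : H) = V1 := rfl
@[simp] theorem val_unitQ : (unitQ : H) = algebraMap R5 H q4 := rfl
@[simp] theorem val_inv_unitU0 : (↑unitU0⁻¹ : H) = U0i := rfl
@[simp] theorem val_inv_unitU1 : (↑unitU1⁻¹ : H) = U1i := rfl
@[simp] theorem val_inv_unitV0 : (↑unitV0⁻¹ : H) = V0i := rfl
@[simp] theorem val_inv_unitV1 : (↑unitV1⁻¹ : H) = V1i := rfl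
@[simp] theorem val_inv_unitQ : (↑unitQ⁻¹ : H) = algebraMap R5 H q4i := rfl

theorem commute_unitQ (u : Hˣ) : Commute unitQ u := Units.ext (Algebra.commutes _ _)

theorem unitV1_mul_unitV0_mul_unitU0_mul_unitU1 :
    unitV1 * unitV0 * unitU0 * unitU1 = unitQ⁻¹ :=
  eq_inv_of_mul_eq_one_right <| Units.ext <| by
    simpa [mul_assoc] using q4_mul_V1_mul_V0_mul_U0_mul_U1

theorem q4i_mul_V1i_mul_YYi : c q4i * V1i * YYi = V0 := by
  have h : unitQ⁻¹ * unitV1⁻¹ * (unitU1⁻¹ * unitU0⁻¹) = unitV0 := by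
    rw [(commute_unitQ _).inv_left.eq, ← unitV1_mul_unitV0_mul_unitU0_mul_unitU1]
    group
  simpa [YYi, c] using congrArg Units.val h

theorem V0i_eq : V0i = c q4 * U0 * XXi := by
  have h : unitV0⁻¹ = unitQ * unitU0 * (unitU1 * unitV1) := by
    calc unitV0⁻¹ = unitU0 * unitU1 * (unitV1 * unitV0 * unitU0 * unitU1)⁻¹ * unitV1 := by
          group
      _ = unitU0 * unitU1 * unitQ * unitV1 := by
        rw [unitV1_mul_unitV0_mul_unitU0_mul_unitU1, inv_inv]
      _ = unitQ * unitU0 * (unitU1 * unitV1) := by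
        rw [← (commute_unitQ (unitU0 * unitU1)).eq]; group
  simpa [XXi, c] using congrArg Units.val h

open FreeAlgebra

section SemilinearLift

variable {A : Type*} [Ring A] [Algebra R5 A] {θ : R5 →+* R5} {t : Cgen → A}

def SatisfiesCrel (θ : R5 →+* R5) (t : Cgen → A) : Prop :=
  (t .u0 - algebraMap R5 A (θ u0h)) * (t .u0 + algebraMap R5 A (θ u0hi)) = 0 ∧
  (t .u1 - algebraMap R5 A (θ u1h)) * (t .u1 + algebraMap R5 A (θ u1hi)) = 0 ∧
  (t .v0 - algebraMap R5 A (θ v0h)) * (t .v0 + algebraMap R5 A (θ v0hi)) = 0 ∧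
  (t .v1 - algebraMap R5 A (θ v1h)) * (t .v1 + algebraMap R5 A (θ v1hi)) = 0 ∧
  algebraMap R5 A (θ q4) * t .v1 * t .v0 * t .u0 * t .u1 = 1

theorem SatisfiesCrel.twistedLift_eq (h : SatisfiesCrel θ t) ⦃x y : FreeAlgebra R5 Cgen⦄
    (hxy : Crel x y) : twistedLift θ t x = twistedLift θ t y := by
  obtain ⟨hU0, hU1, hV0, hV1, hq⟩ := h
  cases hxy <;> simpa

def semilinearLift (h : SatisfiesCrel θ t) : H →+* A := RingQuot.lift ⟨_, h.twistedLift_eq⟩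

variable (h : SatisfiesCrel θ t)
include h

theorem semilinearLift_mk (a : FreeAlgebra R5 Cgen) :
    semilinearLift h (RingQuot.mkAlgHom R5 Crel a) = twistedLift θ t a := by
  rw [← AlgHom.coe_toRingHom, RingQuot.mkAlgHom_coe]
  exact RingQuot.lift_mkRingHom_apply _ h.twistedLift_eq a

@[simp]
theorem semilinearLift_algebraMap (r : R5) :
    semilinearLift h (algebraMap R5 H r) = algebraMap R5 A (θ r) := by
  rw [← (RingQuot.mkAlgHom R5 Crel).commutes, semilinearLift_mk, twistedLift_algebraMap]

@[simp] theorem semilinearLift_U0 : semilinearLift h U0 = t .u0 :=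
  (semilinearLift_mk h _).trans (twistedLift_ι _ _ _)
@[simp] theorem semilinearLift_U1 : semilinearLift h U1 = t .u1 :=
  (semilinearLift_mk h _).trans (twistedLift_ι _ _ _)
@[simp] theorem semilinearLift_V0 : semilinearLift h V0 = t .v0 :=
  (semilinearLift_mk h _).trans (twistedLift_ι _ _ _)
@[simp] theorem semilinearLift_V1 : semilinearLift h V1 = t .v1 :=
  (semilinearLift_mk h _).trans (twistedLift_ι _ _ _)

end SemilinearLift

theorem ringHom_ext {A : Type*} [Semiring A] {f g : H →+* A}
    (hc : ∀ r, f (algebraMap R5 H r) = g (algebraMap R5 H r)) (hU0 : f U0 = g U0)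
    (hU1 : f U1 = g U1) (hV0 : f V0 = g V0) (hV1 : f V1 = g V1) : f = g := by
  refine RingQuot.ringQuot_ext f g ?_
  rw [← RingQuot.mkAlgHom_coe R5 Crel]
  refine FreeAlgebra.ringHom_ext (fun r => ?_) ?_
  · simpa only [RingHom.comp_apply, AlgHom.coe_toRingHom, AlgHom.commutes] using hc r
  · rintro ⟨⟩
    exacts [hU0, hU1, hV0, hV1]

def tauGens : Cgen → H
  | .u0 => U0
  | .u1 => U1
  | .v0 => V0i * V1 * V0
  | .v1 => V0

def sigmaGens : Cgen → H
  | .u0 => U0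
  | .u1 => U1
  | .v0 => V1
  | .v1 => V1 * V0 * V1i

variable {θ : R5 ≃+* R5} (hθ : ThetaMinus θ)
include hθ

theorem satisfiesCrel_tauGens : SatisfiesCrel θ tauGens := by
  have hq : unitQ * unitV0 * (unitV0⁻¹ * unitV1 * unitV0) * unitU0 * unitU1 = 1 := by
    rw [← mul_inv_cancel unitQ, ← unitV1_mul_unitV0_mul_unitU0_mul_unitU1]
    group
  refine ⟨?_, ?_, ?_, ?_, ?_⟩ <;>
    simp only [tauGens, RingEquiv.coe_toRingHom, hθ.1, hθ.2.1, hθ.2.2.1, hθ.2.2.2.1,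
      hθ.2.2.2.2, hθ.map_u0hi, hθ.map_u1hi, hθ.map_v0hi, hθ.map_v1hi]
  exacts [hecke_U0, hecke_U1, hecke_conj (A := H) hecke_V1 unitV0, hecke_V0,
    by simpa using congrArg Units.val hq]

theorem satisfiesCrel_sigmaGens : SatisfiesCrel θ sigmaGens := by
  have hq : unitQ * (unitV1 * unitV0 * unitV1⁻¹) * unitV1 * unitU0 * unitU1 = 1 := by
    rw [← mul_inv_cancel unitQ, ← unitV1_mul_unitV0_mul_unitU0_mul_unitU1]
    group
  refine ⟨?_, ?_, ?_, ?_, ?_⟩ <;>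
    simp only [sigmaGens, RingEquiv.coe_toRingHom, hθ.1, hθ.2.1, hθ.2.2.1, hθ.2.2.2.1,
      hθ.2.2.2.2, hθ.map_u0hi, hθ.map_u1hi, hθ.map_v0hi, hθ.map_v1hi]
  exacts [hecke_U0, hecke_U1, hecke_V1, by simpa using hecke_conj (A := H) hecke_V0 unitV1⁻¹,
    by simpa using congrArg Units.val hq]

def tauHom : H →+* H := semilinearLift (satisfiesCrel_tauGens hθ)

def sigmaHom : H →+* H := semilinearLift (satisfiesCrel_sigmaGens hθ.symm)

theorem sigmaHom_comp_tauHom : (sigmaHom hθ).comp (tauHom hθ) = RingHom.id H := by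
  have hV0i : sigmaHom hθ V0i = V1i :=
    map_eq_of_mul_eq_one _ unitV0.inv_mul unitV1.mul_inv (semilinearLift_V0 _)
  refine ringHom_ext (fun r => ?_) ?_ ?_ ?hV0 ?_
  case hV0 =>
    have h : unitV1⁻¹ * (unitV1 * unitV0 * unitV1⁻¹) * unitV1 = unitV0 := by group
    simp only [RingHom.comp_apply, RingHom.id_apply, tauHom, semilinearLift_V0, tauGens, map_mul,
      hV0i]
    simpa [sigmaHom, sigmaGens] using congrArg Units.val h
  all_goals simp [tauHom, sigmaHom, tauGens, sigmaGens]

theorem tauHom_comp_sigmaHom : (tauHom hθ).comp (sigmaHom hθ) = RingHom.id H := by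
  have hV1i : tauHom hθ V1i = V0i :=
    map_eq_of_mul_eq_one _ unitV1.inv_mul unitV0.mul_inv (semilinearLift_V1 _)
  refine ringHom_ext (fun r => ?_) ?_ ?_ ?_ ?hV1
  case hV1 =>
    have h : unitV0 * (unitV0⁻¹ * unitV1 * unitV0) * unitV0⁻¹ = unitV1 := by group
    simp only [RingHom.comp_apply, RingHom.id_apply, sigmaHom, semilinearLift_V1, sigmaGens,
      map_mul, hV1i]
    simpa [tauHom, tauGens] using congrArg Units.val h
  all_goals simp [tauHom, sigmaHom, tauGens, sigmaGens]

def tauEquiv : H ≃+* H :=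
  RingEquiv.ofRingHom (tauHom hθ) (sigmaHom hθ) (tauHom_comp_sigmaHom hθ) (sigmaHom_comp_tauHom hθ)

theorem tauMinus_tauEquiv : TauMinus θ (tauEquiv hθ) := by
  refine ⟨fun r => ?_, ?_, ?_, ?_, ?_⟩ <;>
    simp [tauEquiv, tauHom, tauGens, q4i_mul_V1i_mul_YYi]

end H

namespace TauMinus

variable {θ : R5 ≃+* R5} {τ : H ≃+* H} (hτ : TauMinus θ τ)
include hτ

theorem map_V1 : τ V1 = V0 := hτ.2.2.2.1.trans q4i_mul_V1i_mul_YYi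

theorem eq_tauEquiv (hθ : ThetaMinus θ) : τ = tauEquiv hθ := by
  refine RingEquiv.toRingHom_injective (ringHom_ext (fun r => ?_) ?_ ?_ ?_ ?_)
  · simpa [tauEquiv, tauHom] using hτ.1 r
  all_goals simp [tauEquiv, tauHom, tauGens, hτ.2.1, hτ.2.2.1, hτ.2.2.2.2, hτ.map_V1]

theorem map_YY : τ YY = YY := by
  rw [YY, map_mul, hτ.2.1, hτ.2.2.1]

theorem map_XX : τ XX = V0i * U1i := by
  have hV1i : τ V1i = V0i := map_eq_of_mul_eq_one τ unitV1.inv_mul unitV0.mul_inv hτ.map_V1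
  have hU1i : τ U1i = U1i := map_eq_of_mul_eq_one τ unitU1.inv_mul unitU1.mul_inv hτ.2.2.1
  rw [XX, map_mul, hV1i, hU1i]

end TauMinus

/-- there is a unique ring automorphism `τ₋` of `H`, semilinear over `θ₋`,
with `τ₋(U₀) = U₀`, `τ₋(U₁) = U₁`, `τ₋(V₁) = q^{−1/4}·V₁⁻¹·𝕐⁻¹ (= V₀)`,
`τ₋(V₀) = V₀⁻¹·V₁·V₀`; it satisfies `τ₋(𝕐) = 𝕐` and
`τ₋(𝕏) = V₀⁻¹·U₁⁻¹ = q^{1/4}·U₀·𝕏⁻¹·U₁⁻¹`. -/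
theorem statement8 :
    (∃! θ : R5 ≃+* R5, ThetaMinus θ) ∧
    ∀ θ : R5 ≃+* R5, ThetaMinus θ →
      (∃! τ : H ≃+* H, TauMinus θ τ) ∧
      (c R5.q4i * V1i * YYi = V0) ∧
      ∀ τ : H ≃+* H, TauMinus θ τ →
        τ YY = YY ∧ τ XX = V0i * U1i ∧ V0i * U1i = c R5.q4 * U0 * XXi * U1i := by
  refine ⟨existsUnique_thetaMinus, fun θ hθ => ⟨?_, q4i_mul_V1i_mul_YYi, fun τ hτ => ?_⟩⟩
  · exact ⟨tauEquiv hθ, tauMinus_tauEquiv hθ, fun τ hτ => hτ.eq_tauEquiv hθ⟩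
  · exact ⟨hτ.map_YY, hτ.map_XX, by rw [V0i_eq]⟩
end
end
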